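/- Let K be a field and q ∈ K with q ≠ 0. The following three conditions are equivalent: (1) for every integer n, {n}_q = 0 if and only if n = 0; (2) for all integers n₁, n₂, if {n₁}_q = {n₂}_q then n₁ = n₂; (3) if char K = 0 then q is not a root of unity other than 1 (i.e., for every positive integer n, q^n = 1 implies q = 1), and if char K ≠ 0 then q is not a root of unity at all (i.e., q^n ≠ 1 for every positive integer n). -/

import Mathlib

noncomputable section

open Classical in
/-- The `q`-integer `{n}_q = (qⁿ − 1)/(q − 1)` for `q ≠ 1`, and `{n}_q = n·1_K` for `q = 1`. -/
def qInt (K : Type*) [Field K] (q : K) (n : ℤ) : K :=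
  if q = 1 then (n : K) else (q ^ n - 1) / (q - 1)

/-- The defining relation `AB = q·BA + 1` of the `q`-deformed Heisenberg algebra,
imposed on the free algebra on two generators. -/
inductive qHeisRel (K : Type*) [Field K] (q : K) :
    FreeAlgebra K (Fin 2) → FreeAlgebra K (Fin 2) → Prop
  | rel : qHeisRel K q (FreeAlgebra.ι K 0 * FreeAlgebra.ι K 1)
      (q • (FreeAlgebra.ι K 1 * FreeAlgebra.ι K 0) + 1)

/-- The `q`-deformed Heisenberg algebra `H_q = K⟨A,B⟩/⟨AB − qBA − 1⟩`. -/
abbrev qHeis (K : Type*) [Field K] (q : K) : Type _ := RingQuot (qHeisRel K q)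

/-- The generator `A` of `H_q`. -/
def qA (K : Type*) [Field K] (q : K) : qHeis K q :=
  RingQuot.mkAlgHom K (qHeisRel K q) (FreeAlgebra.ι K 0)

/-- The generator `B` of `H_q`. -/
def qB (K : Type*) [Field K] (q : K) : qHeis K q :=
  RingQuot.mkAlgHom K (qHeisRel K q) (FreeAlgebra.ι K 1)

/-!
Since `q` is invertible, `{m}_q - {n}_q = qⁿ {m - n}_q`, so `n ↦ {n}_q` is injective exactly when
`{n}_q` vanishes only at `n = 0`. For `q ≠ 1` we have `{n}_q = 0 ↔ qⁿ = 1`, so this says that `q`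
has infinite multiplicative order; for `q = 1`, `{n}_q` is the image of `n` in `K`, which vanishes
only at `0` exactly in characteristic zero.
-/

lemma forall_zpow_eq_one_iff_eq_zero_iff_not_isOfFinOrder {G : Type*} [DivisionMonoid G] (x : G) :
    (∀ n : ℤ, x ^ n = 1 ↔ n = 0) ↔ ¬IsOfFinOrder x := by
  simp only [isOfFinOrder_iff_zpow_eq_one, not_exists, not_and]
  exact ⟨fun h n hn hx ↦ hn ((h n).1 hx),
    fun h n ↦ ⟨fun hx ↦ by_contra fun hn ↦ h n hn hx, fun hn ↦ hn ▸ zpow_zero x⟩⟩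

lemma forall_intCast_eq_zero_iff_eq_zero_iff_ringChar_eq_zero {R : Type*} [NonAssocRing R] :
    (∀ n : ℤ, (n : R) = 0 ↔ n = 0) ↔ ringChar R = 0 := by
  rw [CharP.ringChar_zero_iff_CharZero]
  exact ⟨fun h ↦ charZero_of_inj_zero fun n hn ↦ by exact_mod_cast (h n).1 (mod_cast hn),
    fun _ _ ↦ Int.cast_eq_zero⟩

section qInt

variable {K : Type*} [Field K] {q : K}

@[simp]
lemma qInt_one (n : ℤ) : qInt K 1 n = n := by
  simp [qInt]

lemma qInt_of_ne_one (h1 : q ≠ 1) (n : ℤ) : qInt K q n = (q ^ n - 1) / (q - 1) := by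
  simp [qInt, h1]

@[simp]
lemma qInt_zero : qInt K q 0 = 0 := by
  simp [qInt]

lemma qInt_eq_zero_iff_of_ne_one (h1 : q ≠ 1) {n : ℤ} : qInt K q n = 0 ↔ q ^ n = 1 := by
  rw [qInt_of_ne_one h1, div_eq_zero_iff, sub_eq_zero, sub_eq_zero, or_iff_left h1]

lemma qInt_sub_qInt (hq : q ≠ 0) (m n : ℤ) :
    qInt K q m - qInt K q n = q ^ n * qInt K q (m - n) := by
  rcases eq_or_ne q 1 with rfl | h1
  · simp
  · simp only [qInt_of_ne_one h1, zpow_sub₀ hq]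
    field_simp
    ring

lemma qInt_injective_iff (hq : q ≠ 0) :
    Function.Injective (qInt K q) ↔ ∀ n : ℤ, qInt K q n = 0 ↔ n = 0 := by
  refine ⟨fun h n ↦ h.eq_iff' qInt_zero, fun h m n hmn ↦ ?_⟩
  have hdiff : q ^ n * qInt K q (m - n) = 0 := by rw [← qInt_sub_qInt hq, hmn, sub_self]
  rw [mul_eq_zero, h] at hdiff
  exact sub_eq_zero.1 (hdiff.resolve_left (zpow_ne_zero n hq))

end qInt

/-- For `q ≠ 0` the following are equivalent: (1) `{n}_q = 0` iff `n = 0`;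
(2) the map `n ↦ {n}_q` is injective on `ℤ`; (3) if `char K = 0` then `q` is not a root of
unity other than `1`, and if `char K ≠ 0` then `q` is not a root of unity at all. -/
theorem qInt_nonzero_iff_injective_iff_not_root_of_unity
    {K : Type*} [Field K] (q : K) (hq : q ≠ 0) :
    ((∀ n : ℤ, qInt K q n = 0 ↔ n = 0) ↔
      ∀ n₁ n₂ : ℤ, qInt K q n₁ = qInt K q n₂ → n₁ = n₂) ∧
    ((∀ n : ℤ, qInt K q n = 0 ↔ n = 0) ↔
      if ringChar K = 0 then ∀ n : ℕ, 0 < n → q ^ n = 1 → q = 1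
      else ∀ n : ℕ, 0 < n → q ^ n ≠ 1) := by
  refine ⟨(qInt_injective_iff hq).symm, ?_⟩
  rcases eq_or_ne q 1 with rfl | h1
  · simp only [qInt_one, forall_intCast_eq_zero_iff_eq_zero_iff_ringChar_eq_zero]
    split_ifs with hc
    · simp [hc]
    · simpa [hc] using ⟨1, one_ne_zero⟩
  · simp only [qInt_eq_zero_iff_of_ne_one h1,
      forall_zpow_eq_one_iff_eq_zero_iff_not_isOfFinOrder, isOfFinOrder_iff_pow_eq_one]
    split_ifs <;> simp [h1]
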